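/- arXiv:2410.02327 — 5 statements merged into one kernel-verified Lean document; each statement's English description precedes it below -/
import Mathlib

section
/- Assume in addition that B is generated as an A-algebra by π_L. Then lg_A(Ω¹_{B/A}) = Σ_{σ ∈ G, σ ≠ id} lg_A(B/(σ(π_L) − π_L)B); equivalently, Σ_{σ ∈ G} ar(σ) = 0, i.e. the Artin character is orthogonal to the trivial character of G. -/
/-
Since `B = A[π]`, presenting `B` as `A[X]/(f)` with `f` the minimal polynomial of `π` gives
`Ω¹_{B/A} ≅ B/(f'(π))`. Over `L` the polynomial `f` splits as `∏_σ (X - σπ)` with pairwise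
distinct roots (an automorphism fixing `π` fixes `Frac B = L`), so `f'(π) = ∏_{σ ≠ 1} (π - σπ)`.
The `A`-length of `B/(xy)` is additive in the factors, which gives the identity of lengths in
`ℕ∞`. Every such length is finite, as `B/(ϖⁿ)` has `A`-length `n` for a uniformizer `ϖ` of `B`
when the residue fields agree; so the identity descends to `ℤ`, where it reads `Σ_σ ar(σ) = 0`.
-/

open IsLocalRing

open scoped Classical

/-- The length of a module: the supremum of the lengths of chains of submodules,
i.e. the Krull dimension of the lattice of submodules. -/
noncomputable def moduleLength (R M : Type*) [Ring R] [AddCommGroup M] [Module R M] : ℕ∞ :=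
  (Order.krullDim (Submodule R M)).unbotD 0

open Polynomial
open scoped Pointwise TensorProduct

theorem moduleLength_eq_length (R M : Type*) [Ring R] [AddCommGroup M] [Module R M] :
    moduleLength R M = Module.length R M := by
  rw [moduleLength, ← Module.coe_length, WithBot.unbotD_coe]

section QuotientLength

variable (A : Type*) {B : Type*} [CommRing A] [CommRing B] [Algebra A B]

theorem length_quotient_span_mul (a : B) {b : B} (hb : b ∈ nonZeroDivisors B) :
    Module.length A (B ⧸ Ideal.span {a * b}) =
      Module.length A (B ⧸ Ideal.span {a}) + Module.length A (B ⧸ Ideal.span {b}) := by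
  have hspan : (b • Ideal.span {a} : Ideal B) = Ideal.span {a * b} := by
    rw [← Ideal.submodule_span_eq, Submodule.smul_span, Set.smul_set_singleton, smul_eq_mul,
      mul_comm]
  rw [← hspan]
  exact Module.length_eq_add_of_exact
    ((Ideal.mulQuot b (Ideal.span {a})).restrictScalars A)
    ((Ideal.quotOfMul b (Ideal.span {a})).restrictScalars A)
    (Ideal.mulQuot_injective _ hb) (Ideal.quotOfMul_surjective _)
    (Ideal.exact_mulQuot_quotOfMul _)

theorem length_quotient_span_prod {ι : Type*} (s : Finset ι) {x : ι → B}
    (hx : ∀ i ∈ s, x i ∈ nonZeroDivisors B) :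
    Module.length A (B ⧸ Ideal.span {∏ i ∈ s, x i}) =
      ∑ i ∈ s, Module.length A (B ⧸ Ideal.span {x i}) := by
  induction s using Finset.induction_on with
  | empty =>
    rw [Finset.prod_empty, Ideal.span_singleton_one]
    exact Module.length_eq_zero
  | insert i s hi ih =>
    rw [Finset.prod_insert hi, Finset.sum_insert hi, mul_comm,
      length_quotient_span_mul A _ (hx i (s.mem_insert_self i)),
      ih fun j hj ↦ hx j (Finset.mem_insert_of_mem hj), add_comm]

theorem length_quotient_span_pow {b : B} (hb : b ∈ nonZeroDivisors B) (n : ℕ) :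
    Module.length A (B ⧸ Ideal.span {b ^ n}) = n * Module.length A (B ⧸ Ideal.span {b}) := by
  have := length_quotient_span_prod A (Finset.range n) (x := fun _ ↦ b) (fun _ _ ↦ hb)
  rwa [Finset.prod_const, Finset.sum_const, Finset.card_range, nsmul_eq_mul] at this

end QuotientLength

section DiscreteValuationRing

variable {A B : Type*} [CommRing A] [IsLocalRing A] [CommRing B] [IsDomain B]
  [IsDiscreteValuationRing B] [Algebra A B] [IsLocalHom (algebraMap A B)]

theorem length_quotient_span_irreducible
    (hres : Function.Surjective (ResidueField.map (algebraMap A B))) {π : B} (hπ : Irreducible π) :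
    Module.length A (B ⧸ Ideal.span {π}) = 1 := by
  have hsurj : Function.Surjective (algebraMap A (B ⧸ maximalIdeal B)) := fun y ↦ by
    obtain ⟨a, ha⟩ := hres y
    obtain ⟨a, rfl⟩ := residue_surjective a
    exact ⟨a, by rw [← ha, ResidueField.map_residue]; rfl⟩
  rw [← hπ.maximalIdeal_eq, Module.length_eq_of_surjective hsurj]
  exact Module.length_eq_one (ResidueField B) (ResidueField B)

theorem length_quotient_span_ne_top
    (hres : Function.Surjective (ResidueField.map (algebraMap A B))) {x : B} (hx : x ≠ 0) :
    Module.length A (B ⧸ Ideal.span {x}) ≠ ⊤ := by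
  obtain ⟨π, hπ⟩ := IsDiscreteValuationRing.exists_irreducible B
  obtain ⟨n, hn⟩ := IsDiscreteValuationRing.associated_pow_irreducible hx hπ
  rw [Ideal.span_singleton_eq_span_singleton.mpr hn, length_quotient_span_pow A
    (mem_nonZeroDivisors_of_ne_zero hπ.ne_zero), length_quotient_span_irreducible hres hπ, mul_one]
  exact ENat.natCast_ne_top n

end DiscreteValuationRing

namespace KaehlerDifferential

section Presentation

variable {R P S : Type*} [CommRing R] [CommRing P] [CommRing S] [Algebra R P] [Algebra P S]
  [Algebra R S] [IsScalarTower R P S]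

theorem ker_mapBaseChange_eq_span (hsurj : Function.Surjective (algebraMap P S)) {f : P}
    (hf : RingHom.ker (algebraMap P S) = Ideal.span {f}) :
    LinearMap.ker (mapBaseChange R P S) = Submodule.span S {1 ⊗ₜ D R P f} := by
  have hrange := range_kerCotangentToTensor R P S hsurj
  have hfker : f ∈ RingHom.ker (algebraMap P S) := hf ▸ Ideal.mem_span_singleton_self f
  apply le_antisymm
  · intro x hx
    obtain ⟨c, rfl⟩ : x ∈ LinearMap.range (kerCotangentToTensor R P S) := hrange ▸ hx
    obtain ⟨⟨g, hg⟩, rfl⟩ := Ideal.toCotangent_surjective _ c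
    obtain ⟨h, rfl⟩ := Ideal.mem_span_singleton'.mp (hf ▸ hg)
    rw [kerCotangentToTensor_toCotangent, Derivation.leibniz, TensorProduct.tmul_add,
      TensorProduct.tmul_smul, TensorProduct.tmul_smul, ← algebraMap_smul S h,
      ← algebraMap_smul S f, RingHom.mem_ker.mp hfker, zero_smul, add_zero]
    exact Submodule.smul_mem _ _ (Submodule.mem_span_singleton_self _)
  · rw [Submodule.span_le, Set.singleton_subset_iff]
    change _ ∈ (LinearMap.ker (mapBaseChange R P S)).restrictScalars P
    rw [← hrange]
    exact ⟨Ideal.toCotangent _ ⟨f, hfker⟩, kerCotangentToTensor_toCotangent R P S _⟩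

end Presentation

section Polynomial

variable {R S : Type*} [CommRing R] [CommRing S]

noncomputable def polynomialBaseChangeEquiv [Algebra R[X] S] :
    S ⊗[R[X]] Ω[R[X]⁄R] ≃ₗ[S] S :=
  (TensorProduct.AlgebraTensorModule.congr (LinearEquiv.refl S S) (polynomialEquiv R)).trans
    (Algebra.TensorProduct.rid R[X] S S).toLinearEquiv

theorem polynomialBaseChangeEquiv_tmul_D [Algebra R[X] S] (g : R[X]) :
    polynomialBaseChangeEquiv (1 ⊗ₜ D R R[X] g) = algebraMap R[X] S (derivative g) := by
  simp [polynomialBaseChangeEquiv, Algebra.smul_def]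

variable [Algebra R S]

noncomputable def quotientSpanDerivativeEquiv [Algebra R[X] S] [IsScalarTower R R[X] S]
    (hsurj : Function.Surjective (algebraMap R[X] S)) {f : R[X]}
    (hf : RingHom.ker (algebraMap R[X] S) = Ideal.span {f}) :
    Ω[S⁄R] ≃ₗ[S] S ⧸ Ideal.span {algebraMap R[X] S (derivative f)} :=
  ((mapBaseChange R R[X] S).quotKerEquivOfSurjective
    (mapBaseChange_surjective R R[X] S hsurj)).symm.trans
    (Submodule.Quotient.equiv _ _ polynomialBaseChangeEquiv (by
      rw [ker_mapBaseChange_eq_span hsurj hf, Submodule.map_span, Set.image_singleton,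
        LinearEquiv.coe_coe, polynomialBaseChangeEquiv_tmul_D]))

noncomputable def quotientSpanAevalDerivativeEquiv {x : S}
    (hx : Algebra.adjoin R {x} = ⊤) {f : R[X]}
    (hf : RingHom.ker (aeval x).toRingHom = Ideal.span {f}) :
    Ω[S⁄R] ≃ₗ[S] S ⧸ Ideal.span {aeval x (derivative f)} := by
  letI := (aeval (R := R) x).toAlgebra
  haveI : IsScalarTower R R[X] S := .of_algebraMap_eq fun r ↦ (aeval_C x r).symm
  have hsurj : Function.Surjective (algebraMap R[X] S) := fun b ↦ by
    obtain ⟨g, hg⟩ : b ∈ (aeval (R := R) x).range := by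
      rw [← Algebra.adjoin_singleton_eq_range_aeval, hx]
      trivial
    exact ⟨g, hg⟩
  have hf' : RingHom.ker (algebraMap R[X] S) = Ideal.span {f} := hf
  exact quotientSpanDerivativeEquiv (R := R) hsurj hf'

end Polynomial

end KaehlerDifferential

theorem length_kaehlerDifferential_of_adjoin_eq_top {A B : Type*} [CommRing A] [IsDomain A]
    [IsIntegrallyClosed A] [CommRing B] [IsDomain B] [Algebra A B] [Module.IsTorsionFree A B]
    {π : B} (hπ : IsIntegral A π) (hgen : Algebra.adjoin A {π} = ⊤) :
    Module.length A (Ω[B⁄A]) =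
      Module.length A (B ⧸ Ideal.span {aeval π (derivative (minpoly A π))}) :=
  ((KaehlerDifferential.quotientSpanAevalDerivativeEquiv hgen
    (minpoly.ker_eval hπ)).restrictScalars A).length_eq

namespace Polynomial

theorem eval_derivative_prod_X_sub_C {R ι : Type*} [CommRing R] [DecidableEq ι] {s : Finset ι}
    (v : ι → R) {i : ι} (hi : i ∈ s) :
    (derivative (∏ j ∈ s, (X - C (v j)))).eval (v i) = ∏ j ∈ s.erase i, (v i - v j) := by
  rw [← Finset.mul_prod_erase s _ hi, derivative_mul, derivative_X_sub_C, eval_add, eval_mul,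
    eval_mul, eval_sub, eval_X, eval_C, sub_self, zero_mul, add_zero, eval_one, one_mul, eval_prod]
  simp only [eval_sub, eval_X, eval_C]

end Polynomial

section Galois

variable {K L : Type*} [Field K] [Field L] [Algebra K L] [FiniteDimensional K L] [IsGalois K L]

theorem map_minpoly_eq_prod_X_sub_C {x : L} (hx : Function.Injective fun σ : L ≃ₐ[K] L ↦ σ x) :
    (minpoly K x).map (algebraMap K L) = ∏ σ : L ≃ₐ[K] L, (X - C (σ x)) := by
  refine eq_of_monic_of_dvd_of_natDegree_le (monic_prod_of_monic _ _ fun σ _ ↦ monic_X_sub_C _)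
    ((minpoly.monic (.of_finite K x)).map _) ?_ ?_
  · refine Finset.prod_dvd_of_coprime (fun σ _ τ _ h ↦ pairwise_coprime_X_sub_C hx h)
      fun σ _ ↦ dvd_iff_isRoot.mpr ?_
    rw [IsRoot, eval_map_algebraMap, ← AlgEquiv.coe_toAlgHom, aeval_algHom_apply, minpoly.aeval,
      map_zero]
  · rw [natDegree_map, natDegree_prod_of_monic _ _ fun σ _ ↦ monic_X_sub_C _]
    simp only [natDegree_X_sub_C, Finset.sum_const, Finset.card_univ, smul_eq_mul, mul_one]
    rw [← Nat.card_eq_fintype_card, IsGalois.card_aut_eq_finrank]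
    exact minpoly.natDegree_le x

theorem aeval_derivative_minpoly_eq_prod {x : L}
    (hx : Function.Injective fun σ : L ≃ₐ[K] L ↦ σ x) :
    aeval x (derivative (minpoly K x)) =
      ∏ σ ∈ Finset.univ.erase (1 : L ≃ₐ[K] L), (x - σ x) := by
  rw [aeval_def, ← eval_map, ← derivative_map, map_minpoly_eq_prod_X_sub_C hx]
  exact eval_derivative_prod_X_sub_C (fun σ : L ≃ₐ[K] L ↦ σ x) (Finset.mem_univ 1)

end Galois

theorem algHom_ext_of_isFractionRing_of_adjoin_eq_top {A B K L : Type*} [CommRing A] [CommRing B]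
    [Field K] [Field L] [Algebra A K] [Algebra K L] [Algebra A B] [Algebra B L] [Algebra A L]
    [IsScalarTower A K L] [IsScalarTower A B L] [IsFractionRing B L] {π : B}
    (hgen : Algebra.adjoin A {π} = ⊤) {σ τ : L →ₐ[K] L}
    (h : σ (algebraMap B L π) = τ (algebraMap B L π)) : σ = τ := by
  have hB : (σ.restrictScalars A).comp (IsScalarTower.toAlgHom A B L) =
      (τ.restrictScalars A).comp (IsScalarTower.toAlgHom A B L) :=
    AlgHom.ext_of_adjoin_eq_top hgen (by simpa using h)
  have hL : (σ : L →+* L) = τ :=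
    IsLocalization.ringHom_ext (nonZeroDivisors B) congr(($hB : B →+* L))
  exact AlgHom.coe_ringHom_injective hL

section IntegralClosure

variable {A B K L : Type*} [CommRing A] [IsDomain A] [CommRing B] [IsDomain B]
  [Field K] [Field L] [Algebra A K] [IsFractionRing A K] [Algebra K L] [FiniteDimensional K L]
  [Algebra A B] [Algebra B L] [Algebra A L] [IsScalarTower A K L] [IsScalarTower A B L]
  [IsIntegralClosure B A L] {π : B}

theorem injective_apply_algebraMap_of_adjoin_eq_top (hgen : Algebra.adjoin A {π} = ⊤) :
    Function.Injective fun σ : L ≃ₐ[K] L ↦ σ (algebraMap B L π) := fun _ _ h ↦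
  have := IsIntegralClosure.isFractionRing_of_finite_extension A K L B
  AlgEquiv.coe_toAlgHom_injective (algHom_ext_of_isFractionRing_of_adjoin_eq_top hgen h)

variable [IsIntegrallyClosed A]

theorem algebraMap_aeval_derivative_minpoly [IsGalois K L] (hgen : Algebra.adjoin A {π} = ⊤) :
    algebraMap B L (aeval π (derivative (minpoly A π))) =
      ∏ σ ∈ Finset.univ.erase (1 : L ≃ₐ[K] L), (algebraMap B L π - σ (algebraMap B L π)) := by
  rw [← aeval_algebraMap_apply, ← aeval_map_algebraMap K, ← derivative_map,
    ← minpoly.isIntegrallyClosed_eq_field_fractions K L (IsIntegralClosure.isIntegral A L π),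
    aeval_derivative_minpoly_eq_prod (injective_apply_algebraMap_of_adjoin_eq_top hgen)]

end IntegralClosure

theorem length_kaehler_eq_sum_lengths_general
    {A B K L : Type*} [CommRing A] [IsDomain A] [IsDiscreteValuationRing A]
    [CommRing B] [IsDomain B] [IsDiscreteValuationRing B]
    [Field K] [Field L]
    [Algebra A K] [IsFractionRing A K]
    [Algebra K L] [FiniteDimensional K L] [IsGalois K L]
    [Algebra A B] [Algebra B L] [Algebra A L]
    [IsScalarTower A K L] [IsScalarTower A B L]
    [IsIntegralClosure B A L]
    [IsLocalHom (algebraMap A B)]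
    (hres : Function.Bijective (ResidueField.map (algebraMap A B)))
    (π : B)
    (res : (L ≃ₐ[K] L) → (B ≃ₐ[A] B))
    (hcompat : ∀ (σ : L ≃ₐ[K] L) (b : B),
      algebraMap B L (res σ b) = σ (algebraMap B L b))
    (hgen : Algebra.adjoin A ({π} : Set B) = ⊤)
    (ar : (L ≃ₐ[K] L) → ℤ)
    (har1 : ar 1 = ((moduleLength A (Ω[B⁄A])).toNat : ℤ))
    (har : ∀ σ : L ≃ₐ[K] L, σ ≠ 1 →
      ar σ = -(((moduleLength A (B ⧸ Ideal.span {res σ π - π})).toNat : ℤ))) :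
    (moduleLength A (Ω[B⁄A]) =
      ∑ σ ∈ Finset.univ.erase (1 : L ≃ₐ[K] L),
        moduleLength A (B ⧸ Ideal.span {res σ π - π})) ∧
    (∑ σ : L ≃ₐ[K] L, ar σ) = 0 := by
  have : Module.IsTorsionFree A L := .trans_faithfulSMul A K L
  have : Module.IsTorsionFree A B := IsIntegralClosure.isTorsionFree A L
  have hinj := injective_apply_algebraMap_of_adjoin_eq_top (K := K) (L := L) hgen
  have hmoved : ∀ σ ∈ Finset.univ.erase (1 : L ≃ₐ[K] L), π - res σ π ≠ 0 := fun σ hσ h ↦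
    Finset.ne_of_mem_erase hσ <| hinj <| by
      change σ _ = (1 : L ≃ₐ[K] L) _
      rw [← hcompat, ← sub_eq_zero.mp h, AlgEquiv.one_apply]
  have hderiv : aeval π (derivative (minpoly A π)) =
      ∏ σ ∈ Finset.univ.erase (1 : L ≃ₐ[K] L), (π - res σ π) :=
    IsIntegralClosure.algebraMap_injective B A L <| by
      rw [algebraMap_aeval_derivative_minpoly (K := K) hgen, map_prod]
      simp only [map_sub, hcompat]
  have hlength : moduleLength A (Ω[B⁄A]) =
      ∑ σ ∈ Finset.univ.erase (1 : L ≃ₐ[K] L),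
        moduleLength A (B ⧸ Ideal.span {res σ π - π}) := by
    simp only [moduleLength_eq_length]
    rw [length_kaehlerDifferential_of_adjoin_eq_top (IsIntegralClosure.isIntegral A L π) hgen,
      hderiv, length_quotient_span_prod A _ fun σ hσ ↦ mem_nonZeroDivisors_of_ne_zero (hmoved σ hσ)]
    exact Finset.sum_congr rfl fun σ _ ↦ by rw [← Ideal.span_singleton_neg, neg_sub]
  have hfinite : ∀ σ ∈ Finset.univ.erase (1 : L ≃ₐ[K] L),
      moduleLength A (B ⧸ Ideal.span {res σ π - π}) ≠ ⊤ := fun σ hσ ↦ by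
    rw [moduleLength_eq_length, ← Ideal.span_singleton_neg, neg_sub]
    exact length_quotient_span_ne_top hres.surjective (hmoved σ hσ)
  refine ⟨hlength, ?_⟩
  rw [← Finset.add_sum_erase _ _ (Finset.mem_univ 1), har1, hlength, ENat.toNat_sum hfinite,
    Finset.sum_congr rfl fun σ hσ ↦ har σ (Finset.ne_of_mem_erase hσ)]
  push_cast
  simp

/-- In the totally ramified DVR setting of the Artin character, assume in
addition that `B` is generated as an `A`-algebra by the uniformizer `π`.  Then
`lg_A Ω¹_{B/A} = Σ_{σ ≠ 1} lg_A (B/(σπ - π))`; equivalently `Σ_{σ ∈ G} ar(σ) = 0`, i.e. the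
Artin character is orthogonal to the trivial character of `G`. -/
theorem length_kaehler_eq_sum_lengths
    {A B K L : Type*} [CommRing A] [IsDomain A] [IsDiscreteValuationRing A]
    [CommRing B] [IsDomain B] [IsDiscreteValuationRing B]
    [Field K] [Field L]
    [Algebra A K] [IsFractionRing A K]
    [Algebra K L] [FiniteDimensional K L] [IsGalois K L]
    [Algebra A B] [Algebra B L] [Algebra A L]
    [IsScalarTower A K L] [IsScalarTower A B L]
    [IsIntegralClosure B A L] [Module.Finite A B]
    [IsLocalHom (algebraMap A B)]
    (hres : Function.Bijective (ResidueField.map (algebraMap A B)))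
    (π : B) (hπ : Irreducible π)
    (res : (L ≃ₐ[K] L) → (B ≃ₐ[A] B))
    (hcompat : ∀ (σ : L ≃ₐ[K] L) (b : B),
      algebraMap B L (res σ b) = σ (algebraMap B L b))
    (hgen : Algebra.adjoin A ({π} : Set B) = ⊤)
    (ar : (L ≃ₐ[K] L) → ℤ)
    (har1 : ar 1 = ((moduleLength A (Ω[B⁄A])).toNat : ℤ))
    (har : ∀ σ : L ≃ₐ[K] L, σ ≠ 1 →
      ar σ = -(((moduleLength A (B ⧸ Ideal.span {res σ π - π})).toNat : ℤ))) :
    (moduleLength A (Ω[B⁄A]) =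
      ∑ σ ∈ Finset.univ.erase (1 : L ≃ₐ[K] L),
        moduleLength A (B ⧸ Ideal.span {res σ π - π})) ∧
    (∑ σ : L ≃ₐ[K] L, ar σ) = 0 :=
  length_kaehler_eq_sum_lengths_general hres π res hcompat hgen ar har1 har
end

section
/- The formal derivative of the minimal polynomial of α, evaluated at α, equals the product of α − σ(α) over all nonidentity elements σ of the Galois group: (minpoly K α)'(α) = ∏_{σ ∈ Gal(L/K), σ ≠ id} (α − σ(α)). -/
/-!
Since `α` generates `L`, an automorphism is determined by its value at `α`, so the conjugates
`σ α` are `|Gal(L/K)| = [L : K] = deg (minpoly K α)` distinct roots of the minimal polynomial.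
Hence over `L` it factors as `∏_σ (X - σ α)`, and the derivative of such a product at the root
`α = 1 α` is the product of the remaining factors `α - σ α`.
-/

open Polynomial IntermediateField

theorem Polynomial.eval_derivative_prod_X_sub_C_s3 {R ι : Type*} [CommRing R] [DecidableEq ι]
    {s : Finset ι} (f : ι → R) {i : ι} (hi : i ∈ s) :
    eval (f i) (derivative (∏ j ∈ s, (X - C (f j)))) = ∏ j ∈ s.erase i, (f i - f j) := by
  rw [← Finset.mul_prod_erase s _ hi, derivative_mul]
  simp [eval_prod]

theorem AlgEquiv.injective_apply_of_adjoin_simple_eq_top {K L : Type*} [Field K] [Field L]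
    [Algebra K L] {α : L} (hint : IsAlgebraic K α) (hα : K⟮α⟯ = ⊤) :
    Function.Injective fun σ : L ≃ₐ[K] L => σ α := by
  have hadj : Algebra.adjoin K {α} = ⊤ := by
    rw [← adjoin_simple_toSubalgebra_of_isAlgebraic hint, hα, top_toSubalgebra]
  intro σ τ h
  exact AlgEquiv.coe_toAlgHom_injective (AlgHom.ext_of_adjoin_eq_top hadj (by simpa using h))

theorem minpoly.map_eq_prod_X_sub_C_of_adjoin_simple_eq_top {K L : Type*} [Field K] [Field L]
    [Algebra K L] [FiniteDimensional K L] [IsGalois K L] {α : L} (hα : K⟮α⟯ = ⊤) :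
    (minpoly K α).map (algebraMap K L) = ∏ σ : L ≃ₐ[K] L, (X - C (σ α)) := by
  have hint : IsIntegral K α := .of_finite K α
  have hinj := AlgEquiv.injective_apply_of_adjoin_simple_eq_top hint.isAlgebraic hα
  have hdvd : ∏ σ : L ≃ₐ[K] L, (X - C (σ α)) ∣ (minpoly K α).map (algebraMap K L) :=
    Finset.prod_dvd_of_coprime ((pairwise_coprime_X_sub_C hinj).set_pairwise _) fun σ _ => by
      rw [dvd_iff_isRoot, IsRoot, eval_map_algebraMap]
      exact minpoly.aeval_algHom K (σ : L →ₐ[K] L) α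
  have hdeg : ((minpoly K α).map (algebraMap K L)).natDegree = Fintype.card (L ≃ₐ[K] L) := by
    rw [natDegree_map, ← adjoin.finrank hint, hα, finrank_top', ← IsGalois.card_aut_eq_finrank,
      Nat.card_eq_fintype_card]
  refine eq_of_monic_of_dvd_of_natDegree_le
    (monic_prod_of_monic _ _ fun σ _ => monic_X_sub_C (σ α)) ((minpoly.monic hint).map _) hdvd ?_
  rw [hdeg, natDegree_finsetProd_X_sub_C_eq_card, Finset.card_univ]

open scoped Classical in
/-- For `L/K` a finite Galois extension and `α ∈ L` with `K(α) = L`,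
the derivative of the minimal polynomial of `α`, evaluated at `α`, equals
`∏_{σ ≠ 1} (α - σ α)`. -/
theorem derivative_minpoly_eq_prod_sub {K L : Type*} [Field K] [Field L] [Algebra K L]
    [FiniteDimensional K L] [IsGalois K L]
    (α : L) (hα : IntermediateField.adjoin K {α} = ⊤) :
    aeval α (derivative (minpoly K α)) =
      ∏ σ ∈ Finset.univ.erase (1 : L ≃ₐ[K] L), (α - σ α) := by
  rw [← eval_map_algebraMap, ← derivative_map,
    minpoly.map_eq_prod_X_sub_C_of_adjoin_simple_eq_top hα]
  exact eval_derivative_prod_X_sub_C_s3 (fun σ : L ≃ₐ[K] L => σ α) (Finset.mem_univ 1)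
end

section
/- Every left R[G]-module M whose underlying R-module is projective is projective as an R[G]-module. -/
/-!
Base change `A ⊗[R] M` along `R → A = R[G]` is `A`-projective, and the multiplication map
`A ⊗[R] M → M` is `A`-linear with the `R`-linear section `m ↦ 1 ⊗ m`. Averaging that section
over `G` as in Maschke's theorem, `σ ↦ |G|⁻¹ ∑ g⁻¹ σ (g -)`, makes it `A`-linear, so `M` is an
`A`-linear direct summand of a projective `A`-module.
-/

open MonoidAlgebra TensorProduct

namespace LinearMap

variable {k G V W : Type*} [CommRing k] [Group G]
  [AddCommGroup V] [Module k V] [Module k[G] V] [IsScalarTower k k[G] V]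
  [AddCommGroup W] [Module k W] [Module k[G] W] [IsScalarTower k k[G] W]
  {σ : V →ₗ[k] W} {p : W →ₗ[k[G]] V}

theorem rightInverse_conjugate (h : Function.RightInverse σ p) (g : G) :
    Function.RightInverse (σ.conjugate g) p := fun v => by
  rw [conjugate_apply, map_smul, h, smul_smul, single_mul_single, mul_one, inv_mul_cancel,
    ← one_def, one_smul]

theorem rightInverse_equivariantProjection [Fintype G] (hcard : IsUnit (Nat.card G : k))
    (h : Function.RightInverse σ p) : Function.RightInverse (σ.equivariantProjection G) p :=
  fun v => by
    rw [equivariantProjection_apply, map_smul_of_tower, map_sum]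
    simp only [rightInverse_conjugate h _ v]
    rw [Finset.sum_const, Finset.card_univ, Fintype.card_eq_nat_card, ← Nat.cast_smul_eq_nsmul k,
      smul_smul, Ring.inverse_mul_cancel _ hcard, one_smul]

end LinearMap

/-- Let `G` be a finite group and `R` a commutative ring in which the order
of `G` is invertible.  Every left `R[G]`-module `M` whose underlying `R`-module is projective
is projective as an `R[G]`-module. -/
theorem projective_monoidAlgebra_of_projective
    {R G : Type*} [CommRing R] [Group G] [Fintype G]
    [Invertible (Fintype.card G : R)]
    (M : Type*) [AddCommGroup M] [Module (MonoidAlgebra R G) M]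
    [Module R M] [IsScalarTower R (MonoidAlgebra R G) M]
    [Module.Projective R M] :
    Module.Projective (MonoidAlgebra R G) M := by
  let p : MonoidAlgebra R G ⊗[R] M →ₗ[MonoidAlgebra R G] M :=
    AlgebraTensorModule.lift (LinearMap.toSpanSingleton _ _ LinearMap.id)
  let σ : M →ₗ[R] MonoidAlgebra R G ⊗[R] M := TensorProduct.mk R _ M 1
  have hσ : Function.RightInverse σ p := fun m => by simp [p, σ]
  have hcard : IsUnit (Nat.card G : R) := Fintype.card_eq_nat_card (α := G) ▸ isUnit_of_invertible _
  exact .of_split (σ.equivariantProjection G) p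
    (LinearMap.ext (LinearMap.rightInverse_equivariantProjection hcard hσ))
end

section
/- The R-algebra homomorphism from R[G] to the product R × R(G), whose first component is the augmentation map (sending Σ a_g·g to Σ a_g) and whose second component is the quotient map R[G] → R(G), is an isomorphism of R-algebras. -/
section ReducedGroupAlgebra

variable (R G : Type*) [CommRing R] [Group G] [Fintype G]

/-- The norm element `N = ∑_{g ∈ G} g` of the group algebra `R[G]`. -/
noncomputable def normElt : MonoidAlgebra R G :=
  ∑ g : G, MonoidAlgebra.of R G g

/-- The reduced group algebra `R(G)`: the quotient of `R[G]` by the two-sided ideal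
generated by the norm element `N`. -/
def ReducedGroupAlgebra : Type _ :=
  (TwoSidedIdeal.span {normElt R G}).ringCon.Quotient

noncomputable instance : Ring (ReducedGroupAlgebra R G) :=
  inferInstanceAs (Ring ((TwoSidedIdeal.span {normElt R G}).ringCon.Quotient))

/-- The quotient map `R[G] → R(G)`. -/
noncomputable def reducedQuotientHom : MonoidAlgebra R G →+* ReducedGroupAlgebra R G :=
  RingCon.mk' _

noncomputable instance : Algebra R (ReducedGroupAlgebra R G) :=
  RingHom.toAlgebra'
    ((reducedQuotientHom R G).comp (algebraMap R (MonoidAlgebra R G)))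
    (by
      intro c x
      refine Quotient.inductionOn' x (fun y => ?_)
      show reducedQuotientHom R G _ * reducedQuotientHom R G y =
        reducedQuotientHom R G y * reducedQuotientHom R G _
      rw [← map_mul, ← map_mul, Algebra.commutes])

/-- The quotient map `R[G] → R(G)` as an `R`-algebra homomorphism. -/
noncomputable def reducedQuotientAlgHom :
    MonoidAlgebra R G →ₐ[R] ReducedGroupAlgebra R G :=
  { reducedQuotientHom R G with commutes' := fun _ => rfl }

end ReducedGroupAlgebra

/-!
The norm element absorbs multiplication on either side, `a * N = N * a = ε(a) • N` with `ε` the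
augmentation, so the two-sided ideal generated by `N` is just `R • N`, on which `ε` is
`r • N ↦ r * |G|`. As `|G|` is invertible, the two components of the map therefore have
trivially intersecting kernels, and any preimage of a class in `R(G)` can be moved by a multiple
of `N` to reach any prescribed augmentation.
-/

namespace ReducedGroupAlgebra

variable {R G : Type*} [CommRing R] [Group G] [Fintype G]

lemma augmentation_smul_normElt (r : R) :
    MonoidAlgebra.lift R R G 1 (r • normElt R G) = r * Fintype.card G := by
  simp [normElt]

lemma of_mul_normElt (g : G) : MonoidAlgebra.of R G g * normElt R G = normElt R G := by
  simp only [normElt, Finset.mul_sum, ← map_mul]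
  exact Fintype.sum_equiv (Equiv.mulLeft g) _ _ fun _ ↦ rfl

lemma normElt_mul_of (g : G) : normElt R G * MonoidAlgebra.of R G g = normElt R G := by
  simp only [normElt, Finset.sum_mul, ← map_mul]
  exact Fintype.sum_equiv (Equiv.mulRight g) _ _ fun _ ↦ rfl

lemma mul_normElt (a : MonoidAlgebra R G) :
    a * normElt R G = MonoidAlgebra.lift R R G 1 a • normElt R G := by
  induction a using MonoidAlgebra.induction_on with
  | of g => rw [of_mul_normElt]; simp
  | add a b ha hb => rw [add_mul, ha, hb, map_add, add_smul]
  | smul r a ha => rw [smul_mul_assoc, ha, map_smul, smul_assoc]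

lemma normElt_mul (a : MonoidAlgebra R G) :
    normElt R G * a = MonoidAlgebra.lift R R G 1 a • normElt R G := by
  induction a using MonoidAlgebra.induction_on with
  | of g => rw [normElt_mul_of]; simp
  | add a b ha hb => rw [mul_add, ha, hb, map_add, add_smul]
  | smul r a ha => rw [mul_smul_comm, ha, map_smul, smul_assoc]

variable (R G) in
noncomputable def normMultiplesIdeal : TwoSidedIdeal (MonoidAlgebra R G) :=
  .mk' (Set.range (· • normElt R G))
    ⟨0, zero_smul R _⟩
    (by rintro _ _ ⟨r, rfl⟩ ⟨s, rfl⟩; exact ⟨r + s, add_smul r s _⟩)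
    (by rintro _ ⟨r, rfl⟩; exact ⟨-r, neg_smul r _⟩)
    (by rintro a _ ⟨r, rfl⟩
        exact ⟨r * MonoidAlgebra.lift R R G 1 a, by rw [mul_smul_comm, mul_normElt, ← mul_smul]⟩)
    (by rintro _ b ⟨r, rfl⟩
        exact ⟨r * MonoidAlgebra.lift R R G 1 b, by rw [smul_mul_assoc, normElt_mul, ← mul_smul]⟩)

lemma mem_normMultiplesIdeal {x : MonoidAlgebra R G} :
    x ∈ normMultiplesIdeal R G ↔ ∃ r : R, r • normElt R G = x :=
  TwoSidedIdeal.mem_mk' _ _ _ _ _ _ _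

lemma mem_span_normElt_iff {x : MonoidAlgebra R G} :
    x ∈ TwoSidedIdeal.span {normElt R G} ↔ ∃ r : R, r • normElt R G = x := by
  refine ⟨fun hx ↦ ?_, ?_⟩
  · have hle : TwoSidedIdeal.span {normElt R G} ≤ normMultiplesIdeal R G :=
      TwoSidedIdeal.span_le.mpr <| Set.singleton_subset_iff.mpr <|
        mem_normMultiplesIdeal.mpr ⟨1, one_smul R _⟩
    exact mem_normMultiplesIdeal.mp (hle hx)
  · rintro ⟨r, rfl⟩
    rw [Algebra.smul_def]
    exact TwoSidedIdeal.mul_mem_left _ _ _ (TwoSidedIdeal.subset_span rfl)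

lemma reducedQuotientHom_eq_zero_iff {x : MonoidAlgebra R G} :
    reducedQuotientHom R G x = 0 ↔ x ∈ TwoSidedIdeal.span {normElt R G} := by
  rw [← map_zero (reducedQuotientHom R G)]
  exact (RingCon.eq _).trans <| by rw [TwoSidedIdeal.rel_iff, sub_zero]

lemma reducedQuotientHom_smul_normElt (r : R) : reducedQuotientHom R G (r • normElt R G) = 0 :=
  reducedQuotientHom_eq_zero_iff.mpr (mem_span_normElt_iff.mpr ⟨r, rfl⟩)

end ReducedGroupAlgebra

open ReducedGroupAlgebra in
/-- Let `G` be a finite group and `R` a commutative ring in which `|G|` is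
invertible.  The `R`-algebra homomorphism `R[G] → R × R(G)` whose first component is the
augmentation map `∑ a_g·g ↦ ∑ a_g` and whose second component is the quotient map
`R[G] → R(G)` is an isomorphism of `R`-algebras. -/
theorem bijective_augmentation_prod_reducedQuotient
    (R G : Type*) [CommRing R] [Group G] [Fintype G]
    [Invertible (Fintype.card G : R)] :
    Function.Bijective
      ((MonoidAlgebra.lift R R G 1).prod (reducedQuotientAlgHom R G)) := by
  constructor
  · rw [injective_iff_map_eq_zero]
    intro x hx
    rw [AlgHom.prod_apply, Prod.mk_eq_zero] at hx
    obtain ⟨hεx, hqx⟩ := hx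
    obtain ⟨r, rfl⟩ := mem_span_normElt_iff.mp (reducedQuotientHom_eq_zero_iff.mp hqx)
    rw [augmentation_smul_normElt, (isUnit_of_invertible _).mul_left_eq_zero] at hεx
    rw [hεx, zero_smul]
  · rintro ⟨r, q⟩
    obtain ⟨y, rfl⟩ := RingCon.mk'_surjective _ q
    refine ⟨y + ((r - MonoidAlgebra.lift R R G 1 y) * ⅟(Fintype.card G : R)) • normElt R G,
      Prod.ext ?_ ?_⟩
    · change MonoidAlgebra.lift R R G 1 _ = r
      rw [map_add, augmentation_smul_normElt, invOf_mul_cancel_right, add_sub_cancel]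
    · change reducedQuotientHom R G _ = reducedQuotientHom R G y
      rw [map_add, reducedQuotientHom_smul_normElt, add_zero]
end

section
/- Let M be a left R[G]-module whose underlying R-module is projective. Then the norm element N acts by zero on the quotient M/M^G, so that M/M^G is naturally a module over the reduced group algebra R(G), and M/M^G is projective as an R(G)-module. -/
section ReducedGroupAlgebra

variable (R G : Type*) [CommRing R] [Group G] [Fintype G]

/-- The invariants `M^G` of a left `R[G]`-module `M`, as an `R[G]`-submodule. -/
noncomputable def invariantsSubmodule (M : Type*) [AddCommGroup M]
    [Module (MonoidAlgebra R G) M] : Submodule (MonoidAlgebra R G) M where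
  carrier := {m | ∀ g : G, MonoidAlgebra.of R G g • m = m}
  zero_mem' := fun g => smul_zero _
  add_mem' := by
    intro a b ha hb g
    rw [smul_add, ha g, hb g]
  smul_mem' := by
    intro c m hm g
    show MonoidAlgebra.of R G g • c • m = c • m
    rw [smul_smul]
    have key : ∀ k : G, ∀ r : R,
        (MonoidAlgebra.single k r : MonoidAlgebra R G) • m =
          (MonoidAlgebra.single (1 : G) r : MonoidAlgebra R G) • m := by
      intro k r
      have h2 : (MonoidAlgebra.single (1 : G) r : MonoidAlgebra R G) *
          MonoidAlgebra.of R G k = MonoidAlgebra.single k r := by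
        rw [MonoidAlgebra.of_apply, MonoidAlgebra.single_mul_single, one_mul, mul_one]
      rw [← h2, mul_smul, hm k]
    induction c using MonoidAlgebra.induction with
    | zero => simp
    | single_add h r c hh hr ih =>
        rw [mul_add, add_smul, add_smul, ih]
        congr 1
        have h1 : MonoidAlgebra.of R G g * MonoidAlgebra.single h r =
            MonoidAlgebra.single (g * h) r := by
          rw [MonoidAlgebra.of_apply, MonoidAlgebra.single_mul_single, one_mul]
        rw [h1, key (g * h) r, key h r]

end ReducedGroupAlgebra

/-!
Averaging over `G` does all the work, because `|G|` is invertible. Averaging the conjugates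
`g⁻¹ ∘ s ∘ g` of an `R`-linear section `s` of the free presentation `R[G]^(M) → M` gives an
`R[G]`-linear one, so `M` is `R[G]`-projective. The central element `ε = |G|⁻¹ N` is the identity
on `M^G`, so `m ↦ m - ε m` factors through `M/M^G` and splits the quotient map; hence `M/M^G` is
`R[G]`-projective as well. Finally `N` kills `M/M^G`, and projectivity descends along the
surjection `R[G] → R(G)` by pushing a section into `P →₀ R[G]` forward to `P →₀ R(G)`.
-/

open MonoidAlgebra

theorem Module.Projective.of_surjective_ringHom {A B P : Type*} [Semiring A] [Semiring B]
    [AddCommMonoid P] [Module A P] [Module B P] [Module.Projective A P]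
    (φ : A →+* B) (hφ : Function.Surjective φ) (hφP : ∀ (a : A) (p : P), φ a • p = a • p) :
    Module.Projective B P := by
  obtain ⟨s, hs⟩ := Module.projective_def.mp ‹Module.Projective A P›
  let t : P →ₗ[B] P →₀ B :=
    { toFun p := (s p).mapRange φ φ.map_zero
      map_add' p q := by rw [map_add, Finsupp.mapRange_add (map_add φ)]
      map_smul' b p := by
        obtain ⟨a, rfl⟩ := hφ b
        ext x
        simp [hφP] }
  refine Module.projective_def.mpr ⟨t, fun p => ?_⟩
  conv_rhs => rw [← hs p]
  simp [t, Finsupp.linearCombination_apply, Finsupp.sum_mapRange_index, hφP]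

abbrev TwoSidedIdeal.moduleQuotient {A P : Type*} [Ring A] [AddCommGroup P] [Module A P]
    (I : TwoSidedIdeal A) (hI : I ≤ TwoSidedIdeal.ker (Module.toAddMonoidEnd A P)) :
    Module I.ringCon.Quotient P :=
  Module.compHom P (I.ringCon.lift _ (TwoSidedIdeal.ringCon_le_iff.mp hI))

def LinearMap.centralSMul {A M : Type*} [Semiring A] [AddCommMonoid M] [Module A M] {a : A}
    (ha : ∀ x, Commute a x) : M →ₗ[A] M where
  toFun m := a • m
  map_add' := smul_add a
  map_smul' x m := by rw [RingHom.id_apply, smul_smul, (ha x).eq, mul_smul]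

namespace LinearMap

variable {k G : Type*} [CommRing k] [Group G] [Fintype G]
variable {V : Type*} [AddCommGroup V] [Module k V] [Module k[G] V] [IsScalarTower k k[G] V]
variable {W : Type*} [AddCommGroup W] [Module k W] [Module k[G] W] [IsScalarTower k k[G] W]

theorem equivariantProjection_rightInverse (hcard : IsUnit (Nat.card G : k))
    {s : V →ₗ[k] W} {p : W →ₗ[k[G]] V} (hs : Function.RightInverse s p) :
    Function.RightInverse (s.equivariantProjection G) p := by
  intro v
  have hconj (g : G) : p (s.conjugate g v) = v := by
    rw [conjugate_apply, map_smul, hs, smul_smul, single_mul_single, inv_mul_cancel, mul_one,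
      ← one_def, one_smul]
  rw [equivariantProjection_apply, p.map_smul_of_tower, map_sum]
  simp only [hconj]
  rw [Finset.sum_const, Finset.card_univ, Fintype.card_eq_nat_card, ← Nat.cast_smul_eq_nsmul k,
    smul_smul, Ring.inverse_mul_cancel _ hcard, one_smul]

end LinearMap

theorem MonoidAlgebra.projective_of_invertible_card {k G : Type*} [CommRing k] [Group G]
    [Fintype G] [Invertible (Fintype.card G : k)]
    (V : Type*) [AddCommGroup V] [Module k V] [Module k[G] V] [IsScalarTower k k[G] V]
    [Module.Projective k V] : Module.Projective k[G] V := by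
  let p : (V →₀ k[G]) →ₗ[k[G]] V := Finsupp.linearCombination k[G] id
  have hp : Function.Surjective (p.restrictScalars k) := fun v => ⟨Finsupp.single v 1, by simp [p]⟩
  obtain ⟨s, hs⟩ := (p.restrictScalars k).exists_rightInverse_of_surjective
    (LinearMap.range_eq_top.mpr hp)
  have hcard : IsUnit (Nat.card G : k) := by
    rw [← Fintype.card_eq_nat_card]
    exact isUnit_of_invertible _
  exact .of_split (s.equivariantProjection G) p
    (LinearMap.ext (s.equivariantProjection_rightInverse hcard (p := p) (LinearMap.congr_fun hs)))

section NormElement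

variable {R G : Type*} [CommRing R] [Group G] [Fintype G]

theorem of_mul_normElt (g : G) : of R G g * normElt R G = normElt R G := by
  rw [normElt, Finset.mul_sum]
  exact Fintype.sum_bijective (g * ·) (Group.mulLeft_bijective g) _ _ fun x => (map_mul _ g x).symm

theorem normElt_mul_of (g : G) : normElt R G * of R G g = normElt R G := by
  rw [normElt, Finset.sum_mul]
  exact Fintype.sum_bijective (· * g) (Group.mulRight_bijective g) _ _ fun x => (map_mul _ x g).symm

theorem normElt_commute (x : R[G]) : Commute (normElt R G) x := by
  induction x using MonoidAlgebra.induction_on with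
  | of g => exact (normElt_mul_of g).trans (of_mul_normElt g).symm
  | add x y hx hy => exact hx.add_right hy
  | smul r x hx => exact hx.smul_right r

variable (M : Type*) [AddCommGroup M] [Module R[G] M]

theorem normElt_smul_mem_invariantsSubmodule (m : M) :
    normElt R G • m ∈ invariantsSubmodule R G M := fun g => by
  rw [← mul_smul, of_mul_normElt]

theorem normElt_smul_of_mem_invariantsSubmodule {m : M} (hm : m ∈ invariantsSubmodule R G M) :
    normElt R G • m = Fintype.card G • m := by
  rw [normElt, Finset.sum_smul, Finset.sum_congr rfl fun g _ => hm g, Finset.sum_const,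
    Finset.card_univ]

theorem normElt_smul_quotient_invariantsSubmodule (z : M ⧸ invariantsSubmodule R G M) :
    normElt R G • z = 0 := by
  induction z using Submodule.Quotient.induction_on with
  | H m =>
    rw [← Submodule.Quotient.mk_smul, Submodule.Quotient.mk_eq_zero]
    exact normElt_smul_mem_invariantsSubmodule M m

end NormElement

section Invariants

variable (R G : Type*) [CommRing R] [Group G] [Fintype G] [Invertible (Fintype.card G : R)]
  (M : Type*) [AddCommGroup M] [Module R[G] M] [Module R M] [IsScalarTower R R[G] M]

noncomputable def invariantsComplement : (M ⧸ invariantsSubmodule R G M) →ₗ[R[G]] M :=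
  (invariantsSubmodule R G M).liftQ
    (LinearMap.id - LinearMap.centralSMul (a := ⅟(Fintype.card G : R) • normElt R G)
      fun x => (normElt_commute x).smul_left _)
    fun m hm => by
      rw [LinearMap.mem_ker, LinearMap.sub_apply, LinearMap.id_apply, sub_eq_zero]
      change m = (⅟(Fintype.card G : R) • normElt R G) • m
      rw [smul_assoc, normElt_smul_of_mem_invariantsSubmodule M hm, ← Nat.cast_smul_eq_nsmul R,
        smul_smul, invOf_mul_self, one_smul]

theorem mkQ_comp_invariantsComplement :
    (invariantsSubmodule R G M).mkQ ∘ₗ invariantsComplement R G M = LinearMap.id := by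
  refine Submodule.linearMap_qext _ (LinearMap.ext fun m => ?_)
  change Submodule.Quotient.mk (m - (⅟(Fintype.card G : R) • normElt R G) • m) =
    Submodule.Quotient.mk m
  rw [Submodule.Quotient.mk_sub, sub_eq_self, Submodule.Quotient.mk_eq_zero, smul_assoc]
  exact Submodule.smul_of_tower_mem _ _ (normElt_smul_mem_invariantsSubmodule M m)

theorem projective_quotient_invariantsSubmodule [Module.Projective R M] :
    Module.Projective R[G] (M ⧸ invariantsSubmodule R G M) :=
  have := MonoidAlgebra.projective_of_invertible_card (k := R) (G := G) M
  .of_split _ _ (mkQ_comp_invariantsComplement R G M)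

end Invariants

/-- Let `G` be a finite group and `R` a commutative ring in which `|G|` is
invertible, and let `M` be a left `R[G]`-module whose underlying `R`-module is projective.
Then the norm element `N` acts by zero on `M/M^G`, so that `M/M^G` is naturally a module
over the reduced group algebra `R(G)` (i.e. there is an `R(G)`-module structure whose
scalar action is compatible, via the quotient map `R[G] → R(G)`, with the `R[G]`-action),
and `M/M^G` is projective as an `R(G)`-module. -/
theorem quotient_by_invariants_projective_over_reduced
    (R G : Type*) [CommRing R] [Group G] [Fintype G]
    [Invertible (Fintype.card G : R)]
    (M : Type*) [AddCommGroup M] [Module (MonoidAlgebra R G) M]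
    [Module R M] [IsScalarTower R (MonoidAlgebra R G) M]
    [Module.Projective R M] :
    (∀ z : M ⧸ invariantsSubmodule R G M, normElt R G • z = 0) ∧
    ∃ inst : Module (ReducedGroupAlgebra R G) (M ⧸ invariantsSubmodule R G M),
      (∀ (x : MonoidAlgebra R G) (z : M ⧸ invariantsSubmodule R G M),
        SMul.smul (self := inst.toDistribMulAction.toMulAction.toSMul)
          (reducedQuotientHom R G x) z = x • z) ∧
      @Module.Projective (ReducedGroupAlgebra R G) _
        (M ⧸ invariantsSubmodule R G M) _ inst := by
  have hN := normElt_smul_quotient_invariantsSubmodule (R := R) (G := G) M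
  let inst : Module (ReducedGroupAlgebra R G) (M ⧸ invariantsSubmodule R G M) :=
    (TwoSidedIdeal.span {normElt R G}).moduleQuotient <| TwoSidedIdeal.span_le.mpr <|
      Set.singleton_subset_iff.mpr <| (TwoSidedIdeal.mem_ker _).mpr <| AddMonoidHom.ext hN
  refine ⟨hN, inst, fun _ _ => rfl, ?_⟩
  have := projective_quotient_invariantsSubmodule R G M
  exact .of_surjective_ringHom (reducedQuotientHom R G) (RingCon.mk'_surjective _) fun _ _ => rfl
end
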